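/- arXiv:1701.04120 — 2 statements merged into one kernel-verified Lean document; each statement's English description precedes it below -/
import Mathlib

section
/- Let A ⊆ F with |A| = n ≥ 2, let α* ∈ A, and let 1 ≤ r ≤ n be an integer. Suppose g_1,…,g_t ∈ F[x] are polynomials of degree at most r−1 with rank_q{g_1(α*),…,g_t(α*)} = t. For each α ∈ A∖{α*} let b_α = rank_q{g_1(α),…,g_t(α)}. Set L = ((r−1)(q^t−1)+(n−1))/q^t, b_AVE = log_q((n−1)/L), and let ℓ = n−1 if b_AVE is an integer, and ℓ = ⌊(L − (n−1)q^{−⌈b_AVE⌉})/(q^{−⌊b_AVE⌋} − q^{−⌈b_AVE⌉})⌋ otherwise. Then Σ_{α ∈ A∖{α*}} b_α ≥ ℓ·⌊b_AVE⌋ + (n−1−ℓ)·⌈b_AVE⌉. -/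
/-!
For `β ∈ B^t` let `P_β = Σ β_i g_i`. Independence of the `g_i(α*)` makes `P_β ≠ 0` for `β ≠ 0`,
and then `P_β`, of degree `≤ r - 1`, vanishes at no more than `r - 1` points of `A`; `P_0` vanishes
everywhere. The `β` with `P_β(α) = 0` form a kernel of size `q^(t - b_α)`, so counting the pairs
`(α, β)` with `P_β(α) = 0` in two ways gives `Σ_α q^(t - b_α) ≤ (q^t - 1)(r - 1) + (n - 1)`,
i.e. `Σ_α q^(-b_α) ≤ L`. Since `x ↦ q^(-x)` is convex and the `b_α` are integers, each `q^(-b_α)`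
lies above the secant of `q^(-x)` through `⌊b_AVE⌋` and `⌊b_AVE⌋ + 1`; summing these secant bounds
yields the claim.
-/

open Polynomial Module Submodule Finset
open scoped Classical

theorem LinearMap.natCard_ker_eq_pow_sub_finrank_range {K V W : Type*} [Field K]
    [AddCommGroup V] [Module K V] [FiniteDimensional K V] [AddCommGroup W] [Module K W]
    (φ : V →ₗ[K] W) :
    Nat.card (LinearMap.ker φ) = Nat.card K ^ (finrank K V - finrank K (LinearMap.range φ)) := by
  rw [Module.natCard_eq_pow_finrank (K := K), ← φ.finrank_range_add_finrank_ker,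
    Nat.add_sub_cancel_left]

theorem Polynomial.card_filter_eval_eq_zero_le {R : Type*} [CommRing R] [IsDomain R]
    {p : R[X]} (hp : p ≠ 0) (s : Finset R) : #{x ∈ s | p.eval x = 0} ≤ p.natDegree :=
  card_le_degree_of_subset_roots fun x hx => by
    rw [mem_roots hp]
    exact (Finset.mem_filter.mp hx).2

section Counting

variable {B F ι : Type*} [Field B] [Field F] [Algebra B F] [Fintype ι]

variable (B) in
/-- The paper's `b_α = rank_q {g_1(α), …, g_t(α)}`. -/
noncomputable def evalRank (g : ι → F[X]) (α : F) : ℕ :=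
  finrank B (span B (Set.range fun i => (g i).eval α))

theorem evalRank_le_card (g : ι → F[X]) (α : F) : evalRank B g α ≤ Fintype.card ι :=
  finrank_range_le_card (R := B) fun i => (g i).eval α

theorem mem_ker_linearCombination_eval_iff (g : ι → F[X]) (α : F) (β : ι → B) :
    β ∈ LinearMap.ker (Fintype.linearCombination B fun i => (g i).eval α) ↔
      (Fintype.linearCombination B g β).eval α = 0 := by
  simp only [LinearMap.mem_ker, Fintype.linearCombination_apply, eval_finsetSum, eval_smul]

theorem sum_card_pow_sub_evalRank_le [Fintype B] (g : ι → F[X]) (hg : LinearIndependent B g)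
    {d : ℕ} (hdeg : ∀ i, (g i).natDegree ≤ d) (s : Finset F) :
    ∑ α ∈ s, Fintype.card B ^ (Fintype.card ι - evalRank B g α) ≤
      (Fintype.card B ^ Fintype.card ι - 1) * d + #s := by
  set vanishes : F → (ι → B) → Prop := fun α β => (Fintype.linearCombination B g β).eval α = 0
  have hker : ∀ α, Fintype.card B ^ (Fintype.card ι - evalRank B g α) = #{β | vanishes α β} := by
    intro α
    rw [evalRank, ← Fintype.range_linearCombination, ← Nat.card_eq_fintype_card,
      ← Module.finrank_fintype_fun_eq_card (R := B),
      ← LinearMap.natCard_ker_eq_pow_sub_finrank_range, ← SetLike.coe_sort_coe,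
      Nat.card_coe_set_eq, Set.ncard_eq_toFinset_card']
    congr 1
    ext β
    simpa [vanishes] using mem_ker_linearCombination_eval_iff g α β
  have hfew : ∀ β ≠ 0, #{α ∈ s | vanishes α β} ≤ d := by
    intro β hβ
    have hne : Fintype.linearCombination B g β ≠ 0 := fun h =>
      hβ (funext (Fintype.linearIndependent_iff.mp hg β h))
    refine (card_filter_eval_eq_zero_le hne s).trans ?_
    exact natDegree_sum_le_of_forall_le _ _ fun i _ => (natDegree_smul_le _ _).trans (hdeg i)
  calc ∑ α ∈ s, Fintype.card B ^ (Fintype.card ι - evalRank B g α)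
      = ∑ β, #{α ∈ s | vanishes α β} := by
        simp_rw [hker]
        exact sum_card_bipartiteAbove_eq_sum_card_bipartiteBelow vanishes
    _ = #s + ∑ β ∈ univ.erase 0, #{α ∈ s | vanishes α β} := by
        rw [← add_sum_erase _ _ (mem_univ 0)]
        simp [vanishes]
    _ ≤ #s + ∑ _β ∈ univ.erase (0 : ι → B), d := by
        gcongr with β hβ
        exact hfew β (ne_of_mem_erase hβ)
    _ = (Fintype.card B ^ Fintype.card ι - 1) * d + #s := by
        simp [card_erase_of_mem, add_comm]

theorem sum_zpow_neg_evalRank_le [Fintype B] (g : ι → F[X]) (hg : LinearIndependent B g)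
    {d : ℕ} (hdeg : ∀ i, (g i).natDegree ≤ d) (s : Finset F) :
    ∑ α ∈ s, (Fintype.card B : ℝ) ^ (-(evalRank B g α : ℤ)) ≤
      (((Fintype.card B : ℝ) ^ Fintype.card ι - 1) * d + #s) /
        (Fintype.card B : ℝ) ^ Fintype.card ι := by
  have hq : 0 < Fintype.card B := Fintype.card_pos
  rw [le_div_iff₀ (by positivity), sum_mul]
  have hcount := (Nat.cast_le (α := ℝ)).mpr (sum_card_pow_sub_evalRank_le g hg hdeg s)
  rw [Nat.cast_add, Nat.cast_mul, Nat.cast_sub (Nat.one_le_pow _ _ hq), Nat.cast_pow,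
    Nat.cast_one, Nat.cast_sum] at hcount
  have hterm : ∀ α, (Fintype.card B : ℝ) ^ (-(evalRank B g α : ℤ)) *
      (Fintype.card B : ℝ) ^ Fintype.card ι =
        ((Fintype.card B ^ (Fintype.card ι - evalRank B g α) : ℕ) : ℝ) := by
    intro α
    have := evalRank_le_card (B := B) g α
    rw [Nat.cast_pow, ← zpow_natCast, ← zpow_natCast, ← zpow_add₀ (by positivity)]
    congr 1
    omega
  simpa only [hterm] using hcount

end Counting

section Secant

variable {K : Type*} [Field K] [LinearOrder K] [IsStrictOrderedRing K]

theorem one_add_mul_sub_le_zpow {Q : K} (hQ : 0 < Q) (e : ℤ) : 1 + e * (Q - 1) ≤ Q ^ e := by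
  obtain ⟨n, rfl | rfl⟩ := e.eq_nat_or_neg
  · simpa using one_add_mul_sub_le_pow (by linarith) n
  · have hinv : 1 - Q ≤ Q⁻¹ - 1 := by
      have : 0 ≤ (Q - 1) ^ 2 / Q := by positivity
      rw [show (Q - 1) ^ 2 / Q = Q⁻¹ - 1 - (1 - Q) by field_simp; ring] at this
      linarith
    calc 1 + ((-n : ℤ) : K) * (Q - 1) = 1 + n * (1 - Q) := by push_cast; ring
      _ ≤ 1 + n * (Q⁻¹ - 1) := by gcongr
      _ ≤ Q⁻¹ ^ n := one_add_mul_sub_le_pow (by linarith [inv_pos.mpr hQ]) n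
      _ = Q ^ (-n : ℤ) := by rw [zpow_neg, zpow_natCast, inv_pow]

theorem zpow_neg_secant_le {Q : K} (hQ : 0 < Q) (f b : ℤ) :
    Q ^ (-(f + 1)) + (f + 1 - b) * (Q ^ (-f) - Q ^ (-(f + 1))) ≤ Q ^ (-b) := by
  have hf : Q ^ (-f) = Q ^ (-(f + 1)) * Q := by
    rw [← zpow_add_one₀ hQ.ne']; ring_nf
  calc Q ^ (-(f + 1)) + (f + 1 - b) * (Q ^ (-f) - Q ^ (-(f + 1)))
      = Q ^ (-(f + 1)) * (1 + ((f + 1 - b : ℤ) : K) * (Q - 1)) := by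
        rw [hf]; push_cast; ring
    _ ≤ Q ^ (-(f + 1)) * Q ^ (f + 1 - b) := by gcongr; exact one_add_mul_sub_le_zpow hQ _
    _ = Q ^ (-b) := by rw [← zpow_add₀ hQ.ne']; ring_nf

theorem card_mul_add_one_sub_sum_le {ι : Type*} (s : Finset ι) (b : ι → ℤ) {Q L : K}
    (hQ : 1 < Q) (f : ℤ) (h : ∑ i ∈ s, Q ^ (-b i) ≤ L) :
    #s * (f + 1) - ∑ i ∈ s, (b i : K) ≤
      (L - #s * Q ^ (-(f + 1))) / (Q ^ (-f) - Q ^ (-(f + 1))) := by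
  rw [le_div_iff₀ (sub_pos.mpr (zpow_lt_zpow_right₀ hQ (by omega)))]
  have hsecant :=
    sum_le_sum fun i (_ : i ∈ s) => zpow_neg_secant_le (zero_lt_one.trans hQ) f (b i)
  simp only [sum_add_distrib, ← sum_mul, sum_sub_distrib, sum_const, nsmul_eq_mul] at hsecant
  linarith

end Secant

theorem secant_ratio_eq_of_logb_eq_intCast {Q N L : ℝ} {m : ℤ} (hQ : 1 < Q) (hN : 0 < N)
    (hL : 0 < L) (hm : Real.logb Q (N / L) = m) :
    (L - N * Q ^ (-(m + 1))) / (Q ^ (-m) - Q ^ (-(m + 1))) = N := by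
  have hpow := Real.rpow_logb (by linarith) hQ.ne' (div_pos hN hL)
  rw [hm, Real.rpow_intCast] at hpow
  have hL' : L = N * Q ^ (-m) := by
    rw [zpow_neg, hpow]; field_simp
  rw [hL', ← mul_sub,
    mul_div_cancel_right₀ _ (sub_pos.mpr (zpow_lt_zpow_right₀ hQ (by omega))).ne']

theorem floor_mul_add_ceil_mul_le_sum {ι : Type*} (s : Finset ι) (hs : s.Nonempty) (b : ι → ℤ)
    {Q L : ℝ} (hQ : 1 < Q) (h : ∑ i ∈ s, Q ^ (-b i) ≤ L) (bAVE : ℝ)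
    (hbAVE : bAVE = Real.logb Q (#s / L)) (ℓ : ℤ) (hℓ_int : (∃ m : ℤ, bAVE = m) → ℓ = #s)
    (hℓ_nonint : (¬ ∃ m : ℤ, bAVE = m) →
      ℓ = ⌊(L - #s * Q ^ (-⌈bAVE⌉)) / (Q ^ (-⌊bAVE⌋) - Q ^ (-⌈bAVE⌉))⌋) :
    ℓ * ⌊bAVE⌋ + (#s - ℓ) * ⌈bAVE⌉ ≤ ∑ i ∈ s, b i := by
  have hL : 0 < L := (sum_pos (fun i _ => zpow_pos (zero_lt_one.trans hQ) _) hs).trans_le h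
  have hsecant : ∀ f : ℤ, #s * (f + 1) - ∑ i ∈ s, b i ≤
      ⌊(L - #s * Q ^ (-(f + 1))) / (Q ^ (-f) - Q ^ (-(f + 1)))⌋ := fun f => by
    rw [Int.le_floor]
    push_cast
    exact card_mul_add_one_sub_sum_le s b hQ f h
  by_cases hint : ∃ m : ℤ, bAVE = m
  · obtain ⟨m, hm⟩ := hint
    have := hsecant m
    rw [secant_ratio_eq_of_logb_eq_intCast hQ (Nat.cast_pos.mpr hs.card_pos) hL (hbAVE ▸ hm),
      Int.floor_natCast] at this
    rw [hℓ_int ⟨m, hm⟩, hm, Int.floor_intCast, Int.ceil_intCast]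
    linarith
  · have hceil : ⌈bAVE⌉ = ⌊bAVE⌋ + 1 :=
      (Int.ceil_eq_floor_add_one_iff_notMem bAVE).mpr fun ⟨m, hm⟩ => hint ⟨m, hm.symm⟩
    have := hsecant ⌊bAVE⌋
    rw [hℓ_nonint hint, hceil]
    linarith

theorem repair_bandwidth_lower_bound_general
    (q t r n : ℕ) (B F : Type*) [Field B] [Fintype B] [Field F]
    [Algebra B F]
    (hq : Fintype.card B = q)
    (A : Finset F) (hn : A.card = n) (hn2 : 2 ≤ n)
    (αstar : F) (hαstar : αstar ∈ A)
    (hr1 : 1 ≤ r)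
    (g : Fin t → F[X])
    (hdeg : ∀ i, (g i).degree ≤ ((r - 1 : ℕ) : WithBot ℕ))
    (hrank : Module.finrank B
      (Submodule.span B (Set.range fun i => (g i).eval αstar)) = t)
    (b : F → ℕ)
    (hb : ∀ α : F, b α = Module.finrank B
      (Submodule.span B (Set.range fun i => (g i).eval α)))
    (L : ℝ)
    (hL : L = (((r : ℝ) - 1) * ((q : ℝ) ^ t - 1) + ((n : ℝ) - 1)) / (q : ℝ) ^ t)
    (bAVE : ℝ) (hbAVE : bAVE = Real.logb q (((n : ℝ) - 1) / L))
    (ℓ : ℤ)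
    (hℓ_int : (∃ m : ℤ, bAVE = (m : ℝ)) → ℓ = (n : ℤ) - 1)
    (hℓ_nonint : (¬ ∃ m : ℤ, bAVE = (m : ℝ)) →
      ℓ = ⌊(L - ((n : ℝ) - 1) * (q : ℝ) ^ (-(⌈bAVE⌉ : ℤ)))
            / ((q : ℝ) ^ (-(⌊bAVE⌋ : ℤ)) - (q : ℝ) ^ (-(⌈bAVE⌉ : ℤ)))⌋) :
    ℓ * ⌊bAVE⌋ + ((n : ℤ) - 1 - ℓ) * ⌈bAVE⌉ ≤ ∑ α ∈ A.erase αstar, (b α : ℤ) := by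
  have hQ : 1 < (q : ℝ) := by rw [← hq]; exact_mod_cast Fintype.one_lt_card
  have hN : #(A.erase αstar) = n - 1 := by rw [card_erase_of_mem hαstar, hn]
  have hg : LinearIndependent B g :=
    .of_comp ((leval αstar).restrictScalars B) <|
      linearIndependent_iff_card_eq_finrank_span.mpr <| by
        rw [Fintype.card_fin, Set.finrank]; exact hrank.symm
  have hNℝ : (#(A.erase αstar) : ℝ) = n - 1 := by rw [hN, Nat.cast_sub (by omega), Nat.cast_one]
  have hsum : ∑ α ∈ A.erase αstar, (q : ℝ) ^ (-(b α : ℤ)) ≤ L := by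
    have := sum_zpow_neg_evalRank_le g hg (fun i => natDegree_le_iff_degree_le.mpr (hdeg i))
      (A.erase αstar)
    rw [hq, Fintype.card_fin, hNℝ, Nat.cast_sub hr1, Nat.cast_one] at this
    simpa only [show b = evalRank B g from funext hb, hL, mul_comm ((r : ℝ) - 1)] using this
  have hNℤ : (#(A.erase αstar) : ℤ) = n - 1 := by rw [hN, Nat.cast_sub (by omega), Nat.cast_one]
  rw [← hNℝ] at hbAVE hℓ_nonint
  rw [← hNℤ] at hℓ_int ⊢
  exact floor_mul_add_ceil_mul_le_sum _ (card_pos.mp (by omega)) (fun α => (b α : ℤ)) hQ hsum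
    bAVE hbAVE ℓ hℓ_int hℓ_nonint

/-- Proposition 1: the lower bound on the repair bandwidth of any linear
repair scheme over `B = GF(q)` for a Reed–Solomon code `RS(A, k)` with `r = n - k` parities.
With `L = ((r-1)(q^t - 1) + (n-1))/q^t`, `b_AVE = log_q((n-1)/L)`, and `ℓ` defined as
`n - 1` if `b_AVE ∈ ℤ` and `⌊(L - (n-1) q^{-⌈b_AVE⌉}) / (q^{-⌊b_AVE⌋} - q^{-⌈b_AVE⌉})⌋`
otherwise, the bandwidth satisfies
`Σ_{α ∈ A \ {α*}} b_α ≥ ℓ ⌊b_AVE⌋ + (n - 1 - ℓ) ⌈b_AVE⌉`. -/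
theorem repair_bandwidth_lower_bound
    (q t r n : ℕ) (B F : Type*) [Field B] [Fintype B] [Field F] [Fintype F]
    [Algebra B F]
    (hq : Fintype.card B = q) (ht : Module.finrank B F = t)
    (A : Finset F) (hn : A.card = n) (hn2 : 2 ≤ n)
    (αstar : F) (hαstar : αstar ∈ A)
    (hr1 : 1 ≤ r) (hrn : r ≤ n)
    (g : Fin t → F[X])
    (hdeg : ∀ i, (g i).degree ≤ ((r - 1 : ℕ) : WithBot ℕ))
    (hrank : Module.finrank B
      (Submodule.span B (Set.range fun i => (g i).eval αstar)) = t)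
    (b : F → ℕ)
    (hb : ∀ α : F, b α = Module.finrank B
      (Submodule.span B (Set.range fun i => (g i).eval α)))
    (L : ℝ)
    (hL : L = (((r : ℝ) - 1) * ((q : ℝ) ^ t - 1) + ((n : ℝ) - 1)) / (q : ℝ) ^ t)
    (bAVE : ℝ) (hbAVE : bAVE = Real.logb q (((n : ℝ) - 1) / L))
    (ℓ : ℤ)
    (hℓ_int : (∃ m : ℤ, bAVE = (m : ℝ)) → ℓ = (n : ℤ) - 1)
    (hℓ_nonint : (¬ ∃ m : ℤ, bAVE = (m : ℝ)) →
      ℓ = ⌊(L - ((n : ℝ) - 1) * (q : ℝ) ^ (-(⌈bAVE⌉ : ℤ)))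
            / ((q : ℝ) ^ (-(⌊bAVE⌋ : ℤ)) - (q : ℝ) ^ (-(⌈bAVE⌉ : ℤ)))⌋) :
    ℓ * ⌊bAVE⌋ + ((n : ℤ) - 1 - ℓ) * ⌈bAVE⌉ ≤ ∑ α ∈ A.erase αstar, (b α : ℤ) :=
  repair_bandwidth_lower_bound_general q t r n B F hq A hn hn2 αstar hαstar hr1 g hdeg hrank b hb L
    hL bAVE hbAVE ℓ hℓ_int hℓ_nonint
end

section
/- Let n = q^t, 1 ≤ s < t, and k ≤ n − q^s, and let g_1,…,g_t be chosen according to Construction II. Then: (i) for any two polynomials f, f' ∈ F[x] of degree at most k−1 satisfying Tr(g_i(α)·f(α)) = Tr(g_i(α)·f'(α)) for every α ∈ F∖{α*} and every i ∈ {1,…,t}, one has f(α*) = f'(α*) — so the g_i can be used to repair the codeword symbol f(α*) of the full-length Reed–Solomon code RS(F,k); and (ii) Σ_{α ∈ F∖{α*}} rank_q{g_1(α),…,g_t(α)} ≤ (n−1)(t−s), i.e., the repair bandwidth is at most (n−1)(t−s)·log₂q bits. -/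
open Polynomial
open scoped Classical

/-!
For `h = f - f'`, the traces `Tr(g_i(α) h(α))` over `α ≠ α*` determine `Tr(g_i(α*) h(α*))`,
because `∑_{α ∈ F} p(α) = 0` whenever `deg p < n - 1`, and `deg (g_i h) ≤ n - 2`.
With `c = ∏_{w ∈ W ∖ 0} w` one has `c · g_i(α) = ∏_{w ∈ W} (β_i + (α - α*) w)`.
At `α = α*` this is `β_i ^ (q ^ s)`; the Frobenius power maps the basis `β` to a basis, so
nondegeneracy of the trace form recovers `h(α*)`. At `α ≠ α*` it is
`(α - α*) ^ (q ^ s) · L_W(β_i / (α - α*))`, where `L_W = ∏_{w ∈ W} (X - w)` is the subspace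
polynomial of `W`: a `B`-linear map vanishing on `W`, so all `g_i(α)` lie in a space of
dimension at most `t - s`.
-/

open Finset

theorem Polynomial.sum_eval_eq_zero_of_natDegree_lt {K : Type*} [Field K] [Fintype K] (p : K[X])
    (hp : p.natDegree < Fintype.card K - 1) : ∑ x : K, p.eval x = 0 := by
  simp_rw [eval_eq_sum_range, Finset.sum_comm (γ := K), ← Finset.mul_sum]
  refine Finset.sum_eq_zero fun i hi => ?_
  rw [FiniteField.sum_pow_lt_card_sub_one K i ((mem_range.mp hi).trans_le hp), mul_zero]

section Trace

variable {K L : Type*} [Field K] [Field L] [Algebra K L]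

theorem Polynomial.trace_eval_eq_zero_of_forall_ne [Fintype L] (p : L[X])
    (hp : p.natDegree < Fintype.card L - 1) (x : L)
    (h : ∀ y, y ≠ x → Algebra.trace K L (p.eval y) = 0) :
    Algebra.trace K L (p.eval x) = 0 := by
  rw [← Finset.sum_eq_single x (fun y _ hy => h y hy) (fun hx => absurd (mem_univ x) hx),
    ← map_sum, p.sum_eval_eq_zero_of_natDegree_lt hp, map_zero]

theorem eq_zero_of_forall_trace_mul_eq_zero [FiniteDimensional K L] [Algebra.IsSeparable K L]
    {ι : Type*} {v : ι → L} (hv : Submodule.span K (Set.range v) = ⊤) {d : L}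
    (h : ∀ i, Algebra.trace K L (d * v i) = 0) : d = 0 := by
  have hd : Algebra.traceForm K L d = 0 :=
    LinearMap.ext_on_range hv fun i => by simpa [Algebra.traceForm_apply] using h i
  exact (traceForm_nondegenerate K L).1 d fun y => by rw [hd, LinearMap.zero_apply]

theorem FiniteField.span_range_pow_card_pow_eq_top [Fintype K] [Algebra.IsAlgebraic K L]
    {ι : Type*} (β : Module.Basis ι K L) (s : ℕ) :
    Submodule.span K (Set.range fun i => β i ^ Fintype.card K ^ s) = ⊤ := by
  convert (β.map ((frobeniusAlgEquivOfAlgebraic K L) ^ s).toLinearEquiv).span_eq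
  simp [AlgEquiv.coe_pow, coe_frobeniusAlgEquivOfAlgebraic_iterate]

end Trace

section SubspacePoly

variable {B F : Type*} [Field B] [Field F] [Fintype F] [Algebra B F]

noncomputable def subspacePoly (W : Submodule B F) : F[X] := ∏ w : W, (X - C (w : F))

variable (W : Submodule B F)

theorem isMonicOfDegree_subspacePoly : IsMonicOfDegree (subspacePoly W) (Fintype.card W) := by
  have hmonic : ∀ w ∈ (univ : Finset W), (X - C (w : F)).Monic := fun w _ => monic_X_sub_C _
  refine ⟨?_, monic_prod_of_monic _ _ hmonic⟩
  simp [subspacePoly, natDegree_prod_of_monic _ _ hmonic]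

theorem eval_subspacePoly_of_mem {v : F} (hv : v ∈ W) : (subspacePoly W).eval v = 0 := by
  rw [subspacePoly, eval_prod]
  exact prod_eq_zero (mem_univ ⟨v, hv⟩) (by simp)

theorem eval_subspacePoly_add_of_mem {v : F} (hv : v ∈ W) (x : F) :
    (subspacePoly W).eval (x + v) = (subspacePoly W).eval x := by
  simp only [subspacePoly, eval_prod, eval_sub, eval_X, eval_C]
  exact Fintype.prod_equiv (Equiv.subRight ⟨v, hv⟩) _ _ fun w => by simp; ring

theorem eval_subspacePoly_add (x y : F) :
    (subspacePoly W).eval (x + y) = (subspacePoly W).eval x + (subspacePoly W).eval y := by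
  set P := subspacePoly W
  have hP := isMonicOfDegree_subspacePoly W
  -- `Q` has degree below `#W` (the leading terms cancel) but vanishes on all of `W`.
  set Q : F[X] := P.comp (X + C y) - P - C (P.eval y)
  have hQdeg : Q.natDegree < Fintype.card W := by
    have hPy : IsMonicOfDegree (P.comp (X + C y)) (Fintype.card W) := by
      simpa using hP.comp one_ne_zero (isMonicOfDegree_X_add_one y)
    exact natDegree_sub_C.trans_lt (hPy.natDegree_sub_lt Fintype.card_ne_zero hP)
  have hQ : Q = 0 := by
    refine eq_zero_of_natDegree_lt_card_of_eval_eq_zero Q Subtype.val_injective (fun w => ?_) hQdeg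
    simp [Q, eval_comp, add_comm (w : F) y, eval_subspacePoly_add_of_mem W w.2,
      eval_subspacePoly_of_mem W w.2, P]
  simpa [Q, eval_comp, sub_eq_zero, sub_sub] using congrArg (eval x) hQ

theorem prod_add_mul_eq_pow_mul_eval_subspacePoly {u : F} (hu : u ≠ 0) (x : F) :
    ∏ w : W, (x + u * w) = u ^ Fintype.card W * (subspacePoly W).eval (u⁻¹ * x) := by
  rw [subspacePoly, eval_prod, ← Finset.card_univ, ← Finset.prod_const, ← Finset.prod_mul_distrib]
  exact Fintype.prod_equiv (Equiv.neg W) _ _ fun w => by simp; field_simp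

variable [Fintype B]

theorem eval_subspacePoly_smul (c : B) (x : F) :
    (subspacePoly W).eval (c • x) = c • (subspacePoly W).eval x := by
  rcases eq_or_ne c 0 with rfl | hc
  · simp [eval_subspacePoly_of_mem W W.zero_mem]
  have hbij : Function.Bijective fun w : W => c • w :=
    (Finite.injective_iff_bijective).mp (smul_right_injective W hc)
  -- reindexing by `w ↦ c • w` pulls out `c ^ #W = c`
  calc (subspacePoly W).eval (c • x) = ∏ w : W, c • (x - w) := by
        simp only [subspacePoly, eval_prod, eval_sub, eval_X, eval_C]
        exact (Fintype.prod_bijective _ hbij _ _ fun w => by simp [smul_sub]).symm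
    _ = c • (subspacePoly W).eval x := by
        rw [Finset.prod_smul]
        simp [subspacePoly, eval_prod, Module.card_eq_pow_finrank (K := B) (V := W),
          FiniteField.pow_card_pow]

noncomputable def subspacePolyLinearMap : F →ₗ[B] F where
  toFun x := (subspacePoly W).eval x
  map_add' := eval_subspacePoly_add W
  map_smul' := eval_subspacePoly_smul W

theorem subspacePolyLinearMap_apply (x : F) :
    subspacePolyLinearMap W x = (subspacePoly W).eval x :=
  rfl

theorem finrank_range_subspacePolyLinearMap_le :
    Module.finrank B (LinearMap.range (subspacePolyLinearMap W)) ≤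
      Module.finrank B F - Module.finrank B W := by
  have hker : Module.finrank B W ≤ Module.finrank B (LinearMap.ker (subspacePolyLinearMap W)) :=
    Submodule.finrank_mono fun v hv => eval_subspacePoly_of_mem W hv
  have := LinearMap.finrank_range_add_finrank_ker (subspacePolyLinearMap W)
  omega

end SubspacePoly

section ConstructionII

variable {B F : Type*} [Field B] [Field F] [Fintype F] [Algebra B F] (W : Submodule B F)

theorem filter_mem_and_ne_zero_eq_erase :
    univ.filter (fun w : F => w ∈ W ∧ w ≠ 0) = (univ.filter (· ∈ W)).erase 0 := by
  ext; simp [and_comm]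

theorem prod_subspace_eq_mul_prod_ne_zero {M : Type*} [CommMonoid M] (f : F → M) :
    ∏ w : W, f w = f 0 * ∏ w ∈ univ.filter (fun w : F => w ∈ W ∧ w ≠ 0), f w := by
  rw [← Finset.prod_subtype (univ.filter (· ∈ W)) (by simp), filter_mem_and_ne_zero_eq_erase,
    mul_prod_erase _ _ (by simp [W.zero_mem])]

theorem card_filter_mem_and_ne_zero :
    #(univ.filter fun w : F => w ∈ W ∧ w ≠ 0) = Fintype.card W - 1 := by
  rw [filter_mem_and_ne_zero_eq_erase, card_erase_of_mem (by simp [W.zero_mem]),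
    Fintype.card_subtype]

theorem prod_filter_mem_and_ne_zero_ne_zero :
    ∏ w ∈ univ.filter (fun w : F => w ∈ W ∧ w ≠ 0), w ≠ 0 :=
  prod_ne_zero_iff.mpr fun _ hw => (mem_filter.mp hw).2.2

noncomputable def repairPoly (αstar b : F) : F[X] :=
  C b * ∏ w ∈ univ.filter (fun w : F => w ∈ W ∧ w ≠ 0), (X - C (αstar - w⁻¹ * b))

theorem natDegree_repairPoly_le (αstar b : F) :
    (repairPoly W αstar b).natDegree ≤ Fintype.card W - 1 := by
  refine natDegree_C_mul_le _ _ |>.trans <| natDegree_prod_le _ _ |>.trans ?_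
  simp only [natDegree_X_sub_C, sum_const, smul_eq_mul, mul_one, card_filter_mem_and_ne_zero,
    le_rfl]

theorem mul_eval_repairPoly (αstar b α : F) :
    (∏ w ∈ univ.filter (fun w : F => w ∈ W ∧ w ≠ 0), w) * (repairPoly W αstar b).eval α =
      ∏ w : W, (b + (α - αstar) * w) := by
  rw [prod_subspace_eq_mul_prod_ne_zero W (fun w => b + (α - αstar) * w), repairPoly, eval_mul,
    eval_C, eval_prod, mul_zero, add_zero, mul_left_comm, ← prod_mul_distrib]
  congr 1
  refine prod_congr rfl fun w hw => ?_
  have hw0 : w ≠ 0 := (mem_filter.mp hw).2.2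
  simp only [eval_sub, eval_X, eval_C]
  field_simp
  ring

theorem mul_eval_repairPoly_self (αstar b : F) :
    (∏ w ∈ univ.filter (fun w : F => w ∈ W ∧ w ≠ 0), w) * (repairPoly W αstar b).eval αstar =
      b ^ Fintype.card W := by
  simp [mul_eval_repairPoly]

theorem mul_eval_repairPoly_of_ne {α αstar : F} (hα : α ≠ αstar) (b : F) :
    (∏ w ∈ univ.filter (fun w : F => w ∈ W ∧ w ≠ 0), w) * (repairPoly W αstar b).eval α =
      (α - αstar) ^ Fintype.card W * (subspacePoly W).eval ((α - αstar)⁻¹ * b) := by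
  rw [mul_eval_repairPoly, prod_add_mul_eq_pow_mul_eval_subspacePoly W (sub_ne_zero.mpr hα)]

variable [Fintype B]

theorem finrank_span_eval_repairPoly_le {ι : Type*} (b : ι → F) {α αstar : F} (hα : α ≠ αstar) :
    Module.finrank B (Submodule.span B (Set.range fun i => (repairPoly W αstar (b i)).eval α)) ≤
      Module.finrank B F - Module.finrank B W := by
  set c := ∏ w ∈ univ.filter (fun w : F => w ∈ W ∧ w ≠ 0), w
  have hc : c ≠ 0 := prod_filter_mem_and_ne_zero_ne_zero W
  set k := c⁻¹ * (α - αstar) ^ Fintype.card W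
  have hspan : Submodule.span B (Set.range fun i => (repairPoly W αstar (b i)).eval α) ≤
      (LinearMap.range (subspacePolyLinearMap W)).map (LinearMap.mulLeft B k) := by
    rw [Submodule.span_le]
    rintro _ ⟨i, rfl⟩
    refine ⟨subspacePolyLinearMap W ((α - αstar)⁻¹ * b i), LinearMap.mem_range_self _ _, ?_⟩
    rw [LinearMap.mulLeft_apply, subspacePolyLinearMap_apply, mul_assoc,
      ← mul_eval_repairPoly_of_ne W hα, inv_mul_cancel_left₀ hc]
  exact (Submodule.finrank_mono hspan).trans <| (Submodule.finrank_map_le _ _).trans <|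
    finrank_range_subspacePolyLinearMap_le W

theorem eval_eq_zero_of_trace_mul_eval_repairPoly_eq_zero {ι : Type*} (β : Module.Basis ι B F)
    {αstar : F} {h : F[X]} {k : ℕ} (hk : k ≤ Fintype.card F - Fintype.card W)
    (hdeg : h.degree < k)
    (htr : ∀ α, α ≠ αstar → ∀ i,
      Algebra.trace B F ((repairPoly W αstar (β i)).eval α * h.eval α) = 0) :
    h.eval αstar = 0 := by
  rcases eq_or_ne h 0 with rfl | hh
  · exact eval_zero
  set c := ∏ w ∈ univ.filter (fun w : F => w ∈ W ∧ w ≠ 0), w with hc_def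
  have hc : c ≠ 0 := prod_filter_mem_and_ne_zero_ne_zero W
  have hdeg_mul : ∀ i, (repairPoly W αstar (β i) * h).natDegree < Fintype.card F - 1 := fun i => by
    have hg := natDegree_repairPoly_le W αstar (β i)
    have hh_lt := (natDegree_lt_iff_degree_lt hh).mpr hdeg
    have hW_pos : 0 < Fintype.card W := Fintype.card_pos
    exact natDegree_mul_le.trans_lt (by omega)
  have hstar : ∀ i, Algebra.trace B F (c⁻¹ * h.eval αstar * β i ^ Fintype.card W) = 0 := fun i => by
    rw [← mul_eval_repairPoly_self W αstar (β i), ← hc_def, mul_mul_mul_comm, inv_mul_cancel₀ hc,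
      one_mul, mul_comm, ← eval_mul]
    exact (repairPoly W αstar (β i) * h).trace_eval_eq_zero_of_forall_ne (hdeg_mul i) αstar
      fun α hα => by rw [eval_mul]; exact htr α hα i
  have hspan := FiniteField.span_range_pow_card_pow_eq_top β (Module.finrank B W)
  rw [← Module.card_eq_pow_finrank] at hspan
  simpa [hc] using eq_zero_of_forall_trace_mul_eq_zero hspan hstar

end ConstructionII

theorem constructionII_repair_general
    (q t s k n : ℕ) (B F : Type*) [Field B] [Fintype B] [Field F] [Fintype F]
    [Algebra B F]
    (hq : Fintype.card B = q) (ht : Module.finrank B F = t)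
    (hn : n = q ^ t) (hk : k ≤ n - q ^ s)
    (αstar : F) (β : Module.Basis (Fin t) B F)
    (W : Submodule B F) (hW : Module.finrank B W = s)
    (g : Fin t → F[X])
    (hg : ∀ i, g i = C (β i) *
      ∏ w ∈ Finset.univ.filter (fun w : F => w ∈ W ∧ w ≠ 0),
        (X - C (αstar - w⁻¹ * β i))) :
    (∀ f f' : F[X], f.degree < (k : WithBot ℕ) → f'.degree < (k : WithBot ℕ) →
      (∀ α : F, α ≠ αstar → ∀ i : Fin t,
        Algebra.trace B F ((g i).eval α * f.eval α)
          = Algebra.trace B F ((g i).eval α * f'.eval α)) →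
      f.eval αstar = f'.eval αstar) ∧
    ∑ α ∈ Finset.univ.erase αstar,
        Module.finrank B (Submodule.span B (Set.range fun i => (g i).eval α))
      ≤ (n - 1) * (t - s) := by
  obtain rfl : g = fun i => repairPoly W αstar (β i) := funext hg
  have hcardF : Fintype.card F = n := by rw [hn, ← hq, ← ht, Module.card_eq_pow_finrank (K := B)]
  have hcardW : Fintype.card W = q ^ s := by rw [← hq, ← hW, Module.card_eq_pow_finrank (K := B)]
  refine ⟨fun f f' hf hf' htr => ?_, ?_⟩
  · rw [← sub_eq_zero, ← eval_sub]
    refine eval_eq_zero_of_trace_mul_eval_repairPoly_eq_zero W β (by rwa [hcardF, hcardW])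
      ((degree_sub_le f f').trans_lt (max_lt hf hf')) fun α hα i => ?_
    rw [eval_sub, mul_sub, map_sub, htr α hα i, sub_self]
  · calc _ ≤ ∑ _α ∈ Finset.univ.erase αstar, (t - s) :=
          Finset.sum_le_sum fun α hα => by
            simpa [ht, hW] using finrank_span_eval_repairPoly_le W β (Finset.ne_of_mem_erase hα)
      _ = (n - 1) * (t - s) := by simp [Finset.card_erase_of_mem, hcardF]

/-- Theorem 4. Let `n = q^t`, `1 ≤ s < t`, `k ≤ n - q^s`, and let
`g₁, …, g_t` be chosen according to Construction II. Then (i) the traces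
`Tr(gᵢ(α) f(α))`, `α ∈ F \ {α*}`, `i ∈ [t]`, determine the codeword symbol `f(α*)` of
the full-length Reed–Solomon code `RS(F, k)`, and (ii) the repair bandwidth is at most
`(n-1)(t-s)` sub-symbols:
`Σ_{α ∈ F \ {α*}} rank_q {g₁(α), …, g_t(α)} ≤ (n-1)(t-s)`. -/
theorem constructionII_repair
    (q t s k n : ℕ) (B F : Type*) [Field B] [Fintype B] [Field F] [Fintype F]
    [Algebra B F]
    (hq : Fintype.card B = q) (ht : Module.finrank B F = t)
    (hs1 : 1 ≤ s) (hst : s < t)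
    (hn : n = q ^ t) (hk : k ≤ n - q ^ s)
    (αstar : F) (β : Module.Basis (Fin t) B F)
    (W : Submodule B F) (hW : Module.finrank B W = s)
    (g : Fin t → F[X])
    (hg : ∀ i, g i = C (β i) *
      ∏ w ∈ Finset.univ.filter (fun w : F => w ∈ W ∧ w ≠ 0),
        (X - C (αstar - w⁻¹ * β i))) :
    (∀ f f' : F[X], f.degree < (k : WithBot ℕ) → f'.degree < (k : WithBot ℕ) →
      (∀ α : F, α ≠ αstar → ∀ i : Fin t,
        Algebra.trace B F ((g i).eval α * f.eval α)
          = Algebra.trace B F ((g i).eval α * f'.eval α)) →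
      f.eval αstar = f'.eval αstar) ∧
    ∑ α ∈ Finset.univ.erase αstar,
        Module.finrank B (Submodule.span B (Set.range fun i => (g i).eval α))
      ≤ (n - 1) * (t - s) :=
  constructionII_repair_general q t s k n B F hq ht hn hk αstar β W hW g hg
end
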